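/- arXiv:2503.06062 — 4 statements merged into one kernel-verified Lean document; each statement's English description precedes it below -/
import Mathlib

section
/- Let n ≥ 3 and ε > 0. There exists δ > 0, depending only on n and ε, with the following property: if u : ℝⁿ → ℝ is a C² function, f : ℝⁿ → ℝ is continuous, Δu(x) = −f(x)·u(x) for every x ∈ ℝⁿ, and there are constants C₁ ∈ (0, δ] and C₂ > 0 such that |f(x)| ≤ C₁/‖x‖² and |u(x)| ≤ C₂/‖x‖^ε for every x ≠ 0, then u is identically zero. -/
/-- The second derivative of `u` at `p` in direction `v` (applied twice). -/
noncomputable def secondDerivAt {F : Type*} [NormedAddCommGroup F] [NormedSpace ℝ F]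
    (u : F → ℝ) (p v : F) : ℝ :=
  fderiv ℝ (fun q => fderiv ℝ u q v) p v

/-- The Euclidean Laplacian `Δu = Σᵢ ∂²u/∂xᵢ²` on `ℝⁿ`. -/
noncomputable def euclLaplacian {n : ℕ} (u : EuclideanSpace ℝ (Fin n) → ℝ)
    (x : EuclideanSpace ℝ (Fin n)) : ℝ :=
  ∑ i : Fin n, secondDerivAt u x (EuclideanSpace.single i 1)

open Real Filter Set


/-- 1D second derivative test at a local max. -/
lemma secondDeriv_test_1d {g g' : ℝ → ℝ} {L : ℝ}
    (hg : ∀ᶠ t in nhds (0:ℝ), HasDerivAt g (g' t) t)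
    (hg' : HasDerivAt g' L 0) (hmax : IsLocalMax g 0) : L ≤ 0 := by
  by_contra hL
  push_neg at hL
  have h0 : g' 0 = 0 := hmax.hasDerivAt_eq_zero hg.self_of_nhds
  have hslope : Tendsto (slope g' 0) (nhdsWithin 0 {(0:ℝ)}ᶜ) (nhds L) :=
    hasDerivAt_iff_tendsto_slope.1 hg'
  have hev : ∀ᶠ t in nhdsWithin 0 {(0:ℝ)}ᶜ, 0 < slope g' 0 t :=
    hslope.eventually (eventually_gt_nhds hL)
  have hev' : ∀ᶠ t in nhds (0:ℝ), t ≠ 0 → 0 < slope g' 0 t := by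
    simpa [eventually_nhdsWithin_iff] using hev
  obtain ⟨h, hh, H⟩ := Metric.eventually_nhds_iff_ball.1 ((hg.and hmax).and hev')
  -- on (0, h/2], g' t > 0 since slope g' 0 t = g' t / t > 0 and t > 0
  have hmem : ∀ t ∈ Set.Icc (0:ℝ) (h/2), t ∈ Metric.ball (0:ℝ) h := by
    intro t ht
    rw [Metric.mem_ball, Real.dist_eq, sub_zero, abs_of_nonneg ht.1]
    linarith [ht.2, hh]
  have hgpos : ∀ t ∈ Set.Ioo (0:ℝ) (h/2), 0 < g' t := by
    intro t ht
    have hb := H t (hmem t ⟨le_of_lt ht.1, le_of_lt ht.2⟩)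
    have hs := hb.2 (ne_of_gt ht.1)
    rw [slope_def_field, h0, sub_zero, sub_zero, div_pos_iff] at hs
    rcases hs with ⟨h1, _⟩ | ⟨_, h2⟩
    · exact h1
    · linarith [ht.1]
  -- g strictly mono on [0, h/2]
  have hcont : ContinuousOn g (Set.Icc (0:ℝ) (h/2)) := by
    intro t ht
    exact ((H t (hmem t ht)).1.1.continuousAt).continuousWithinAt
  have hmono : StrictMonoOn g (Set.Icc (0:ℝ) (h/2)) := by
    apply strictMonoOn_of_deriv_pos (convex_Icc _ _) hcont
    intro t ht
    rw [interior_Icc] at ht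
    rw [(H t (hmem t ⟨le_of_lt ht.1, le_of_lt ht.2⟩)).1.1.deriv]
    exact hgpos t ht
  have h4 : (0:ℝ) < h/2 := by linarith
  have := hmono (Set.left_mem_Icc.2 (le_of_lt h4)) (Set.right_mem_Icc.2 (le_of_lt h4)) h4
  have hle := (H (h/2) (hmem _ (Set.right_mem_Icc.2 (le_of_lt h4)))).1.2
  exact absurd hle (by simpa using not_le.2 this)

lemma secondDerivAt_nonpos {F : Type*} [NormedAddCommGroup F] [NormedSpace ℝ F]
    {w : F → ℝ} {s : Set F} (hs : IsOpen s) (hw : ContDiffOn ℝ 2 w s)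
    {x : F} (hx : x ∈ s) (hmax : IsLocalMax w x) (v : F) :
    secondDerivAt w x v ≤ 0 := by
  set ℓ : ℝ → F := fun t => x + t • v with hℓ
  have hℓd : ∀ t : ℝ, HasDerivAt ℓ v t := by
    intro t
    simpa [hℓ] using ((hasDerivAt_id t).smul_const v).const_add x
  have hℓ0 : ℓ 0 = x := by simp [hℓ]
  have hℓc : Continuous ℓ := by continuity
  have hmem : ∀ᶠ t in nhds (0:ℝ), ℓ t ∈ s := by
    have : nhds (ℓ 0) = nhds x := by rw [hℓ0]
    exact hℓc.continuousAt.eventually_mem (this ▸ hs.mem_nhds hx)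
  set g : ℝ → ℝ := fun t => w (ℓ t) with hgdef
  set g' : ℝ → ℝ := fun t => fderiv ℝ w (ℓ t) v with hg'def
  have hdiff : ∀ᶠ t in nhds (0:ℝ), HasDerivAt g (g' t) t := by
    filter_upwards [hmem] with t ht
    have hd : DifferentiableAt ℝ w (ℓ t) :=
      (hw.differentiableOn (by norm_num)).differentiableAt (hs.mem_nhds ht)
    exact hd.hasFDerivAt.comp_hasDerivAt t (hℓd t)
  have hfd : ContDiffOn ℝ 1 (fderiv ℝ w) s := hw.fderiv_of_isOpen hs (by norm_num)
  have happ : DifferentiableAt ℝ (fun q => fderiv ℝ w q v) x := by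
    have h1 : DifferentiableAt ℝ (fderiv ℝ w) x :=
      (hfd.differentiableOn (by norm_num)).differentiableAt (hs.mem_nhds hx)
    exact (ContinuousLinearMap.apply ℝ ℝ v).differentiableAt.comp x h1
  have hg'd : HasDerivAt g' (secondDerivAt w x v) 0 := by
    have h2 : HasFDerivAt (fun q => fderiv ℝ w q v)
        (fderiv ℝ (fun q => fderiv ℝ w q v) x) (ℓ 0) := hℓ0 ▸ happ.hasFDerivAt
    exact h2.comp_hasDerivAt 0 (hℓd 0)
  have hgmax : IsLocalMax g 0 := by
    have : Tendsto ℓ (nhds 0) (nhds x) := hℓ0 ▸ hℓc.continuousAt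
    exact IsMaxFilter.comp_tendsto (by rw [hℓ0]; exact hmax) this
  exact secondDeriv_test_1d hdiff hg'd (by simpa [hgdef, hℓ0] using hgmax)

variable {n : ℕ}

local notation "E" => EuclideanSpace ℝ (Fin n)

lemma normsq_eq_sum (x : E) : (‖x‖ : ℝ) ^ 2 = ∑ i, x i ^ 2 := by
  rw [EuclideanSpace.norm_sq_eq]
  simp [Real.norm_eq_abs, sq_abs]

lemma normsq_pos {x : E} (hx : x ≠ 0) : (0:ℝ) < ‖x‖ ^ 2 := pow_pos (norm_pos_iff.2 hx) 2

lemma hasFDerivAt_phi (c : ℝ) {x : E} (hx : x ≠ 0) :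
    HasFDerivAt (fun y : E => (‖y‖ ^ 2 : ℝ) ^ c)
      ((c * (‖x‖ ^ 2 : ℝ) ^ (c - 1)) • (2 • innerSL ℝ x)) x :=
  (hasStrictFDerivAt_norm_sq x).hasFDerivAt.rpow_const (Or.inl (normsq_pos hx).ne')

lemma fderiv_phi_apply (c : ℝ) {x : E} (hx : x ≠ 0) (v : E) :
    fderiv ℝ (fun y : E => (‖y‖ ^ 2 : ℝ) ^ c) x v
      = 2 * c * (‖x‖ ^ 2 : ℝ) ^ (c - 1) * (inner ℝ x v : ℝ) := by
  rw [(hasFDerivAt_phi c hx).fderiv]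
  simp [real_inner_smul_left]
  ring

lemma secondDerivAt_phi (c : ℝ) {x : E} (hx : x ≠ 0) (i : Fin n) :
    secondDerivAt (fun y : E => (‖y‖ ^ 2 : ℝ) ^ c) x (EuclideanSpace.single i 1)
      = 2 * c * ((c - 1) * (‖x‖ ^ 2 : ℝ) ^ (c - 2) * 2 * x i ^ 2
          + (‖x‖ ^ 2 : ℝ) ^ (c - 1)) := by
  set e : E := EuclideanSpace.single i 1 with he
  set ψ : E → ℝ := fun q => 2 * c * ((‖q‖ ^ 2 : ℝ) ^ (c - 1) * q i) with hψ
  have heq : (fun q => fderiv ℝ (fun y : E => (‖y‖ ^ 2 : ℝ) ^ c) q e) =ᶠ[nhds x] ψ := by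
    filter_upwards [isOpen_compl_singleton.mem_nhds (by simpa using hx)] with q hq
    rw [fderiv_phi_apply c (by simpa using hq) e]
    have : (inner ℝ q e : ℝ) = q i := by
      simp [he, EuclideanSpace.inner_single_right]
    rw [this, hψ]; ring
  have h1 := hasFDerivAt_phi (c - 1) hx
  have h2 : HasFDerivAt (fun q : E => q i)
      (EuclideanSpace.proj i : EuclideanSpace ℝ (Fin n) →L[ℝ] ℝ) x := by
    have h2' := (EuclideanSpace.proj i : EuclideanSpace ℝ (Fin n) →L[ℝ] ℝ).hasFDerivAt (x := x)
    simpa [PiLp.proj_apply] using h2'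
  have hmul := (h1.mul h2).const_mul (2 * c)
  rw [secondDerivAt, heq.fderiv_eq, hψ]
  rw [(show HasFDerivAt (fun q : E => 2 * c * ((‖q‖ ^ 2 : ℝ) ^ (c - 1) * q i)) _ x from hmul).fderiv]
  have he1 : e i = 1 := by simp [he]
  simp only [ContinuousLinearMap.coe_smul', Pi.smul_apply, ContinuousLinearMap.add_apply,
    ContinuousLinearMap.smul_apply, innerSL_apply_apply, smul_eq_mul,
    PiLp.proj_apply]
  have hinner : (inner ℝ x e : ℝ) = x i := by
    simp [he, EuclideanSpace.inner_single_right]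
  rw [he1, hinner, show c - 1 - 1 = c - 2 by ring, nsmul_eq_mul]
  push_cast
  ring

lemma euclLaplacian_phi (c : ℝ) {x : E} (hx : x ≠ 0) :
    euclLaplacian (fun y : E => (‖y‖ ^ 2 : ℝ) ^ c) x
      = 2 * c * (2 * (c - 1) + n) * (‖x‖ ^ 2 : ℝ) ^ (c - 1) := by
  have hs : (‖x‖ ^ 2 : ℝ) ≠ 0 := (normsq_pos hx).ne'
  have key : (‖x‖ ^ 2 : ℝ) ^ (c - 1) = (‖x‖ ^ 2 : ℝ) ^ (c - 2) * ‖x‖ ^ 2 := by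
    rw [show c - 1 = (c - 2) + 1 by ring, Real.rpow_add_one hs]
  set A : ℝ := 2 * c * ((c - 1) * (‖x‖ ^ 2 : ℝ) ^ (c - 2) * 2) with hA
  set B : ℝ := 2 * c * (‖x‖ ^ 2 : ℝ) ^ (c - 1) with hB
  have hterm : ∀ i : Fin n, secondDerivAt (fun y : E => (‖y‖ ^ 2 : ℝ) ^ c) x
      (EuclideanSpace.single i 1) = A * x i ^ 2 + B := by
    intro i; rw [secondDerivAt_phi c hx i, hA, hB]; ring
  rw [euclLaplacian]
  simp_rw [hterm]
  rw [Finset.sum_add_distrib, ← Finset.mul_sum, ← normsq_eq_sum, Finset.sum_const,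
    Finset.card_univ, Fintype.card_fin, nsmul_eq_mul, hA, hB, key]
  ring

lemma contDiffOn_phi (c : ℝ) :
    ContDiffOn ℝ 2 (fun y : E => (‖y‖ ^ 2 : ℝ) ^ c) {(0 : E)}ᶜ := by
  apply ContDiffOn.rpow_const_of_ne ((contDiff_norm_sq ℝ (n := 2)).contDiffOn)
  intro y hy
  exact (normsq_pos (by simpa using hy)).ne'

lemma differentiableAt_fderiv_phi (c : ℝ) {x : E} (hx : x ≠ 0) (i : Fin n) :
    DifferentiableAt ℝ
      (fun q : E => fderiv ℝ (fun y : E => (‖y‖ ^ 2 : ℝ) ^ c) q (EuclideanSpace.single i 1)) x := by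
  have hcd := contDiffOn_phi (n := n) c
  have h1 : ContDiffOn ℝ 1 (fderiv ℝ (fun y : E => (‖y‖ ^ 2 : ℝ) ^ c)) {(0 : E)}ᶜ :=
    hcd.fderiv_of_isOpen isOpen_compl_singleton (by norm_num)
  have h2 : DifferentiableAt ℝ (fderiv ℝ (fun y : E => (‖y‖ ^ 2 : ℝ) ^ c)) x :=
    (h1.differentiableOn (by norm_num)).differentiableAt
      (isOpen_compl_singleton.mem_nhds (by simpa using hx))
  exact (ContinuousLinearMap.apply ℝ ℝ (EuclideanSpace.single i 1)).differentiableAt.comp x h2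

lemma secondDerivAt_sub {F : Type*} [NormedAddCommGroup F] [NormedSpace ℝ F]
    (u φ : F → ℝ) (μ : ℝ) {x v : F} (hu : ContDiff ℝ 2 u)
    (hφnear : ∀ᶠ q in nhds x, DifferentiableAt ℝ φ q)
    (hφ2 : DifferentiableAt ℝ (fun q => fderiv ℝ φ q v) x) :
    secondDerivAt (fun y => u y - μ * φ y) x v
      = secondDerivAt u x v - μ * secondDerivAt φ x v := by
  have hud : ∀ q, DifferentiableAt ℝ u q := fun q => (hu.differentiable (by norm_num)) q
  have heq : (fun q => fderiv ℝ (fun y => u y - μ * φ y) q v)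
      =ᶠ[nhds x] (fun q => fderiv ℝ u q v - μ * fderiv ℝ φ q v) := by
    filter_upwards [hφnear] with q hq
    rw [fderiv_fun_sub (hud q) (hq.const_mul μ), fderiv_const_mul hq μ]
    simp
  have huv : DifferentiableAt ℝ (fun q => fderiv ℝ u q v) x := by
    have h1 : ContDiff ℝ 1 (fderiv ℝ u) := hu.fderiv_right (by norm_num)
    exact (ContinuousLinearMap.apply ℝ ℝ v).differentiableAt.comp x (h1.differentiable
      (by norm_num) x)
  rw [secondDerivAt, heq.fderiv_eq, fderiv_fun_sub huv (hφ2.const_mul μ),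
    fderiv_const_mul hφ2 μ]
  simp [secondDerivAt]

lemma annulus_bound (hn : 3 ≤ n) {u f : E → ℝ} (hu : ContDiff ℝ 2 u)
    (hpde : ∀ x, euclLaplacian u x = -(f x * u x)) {C₁ α : ℝ}
    (hα0 : 0 < α) (hαn : α < (n : ℝ) - 2)
    (hC₁ : C₁ ≤ α * ((n : ℝ) - 2 - α) / 2)
    (hf : ∀ x : E, x ≠ 0 → |f x| ≤ C₁ / ‖x‖ ^ 2)
    {a R K : ℝ} (ha : 0 < a) (haR : a < R) (hK : 0 < K)
    (hbd : ∀ x : E, ‖x‖ = a ∨ ‖x‖ = R → u x ≤ K * ((‖x‖ ^ 2 : ℝ)) ^ (-(α / 2)))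
    {x : E} (hax : a ≤ ‖x‖) (hxR : ‖x‖ ≤ R) :
    u x ≤ K * ((‖x‖ ^ 2 : ℝ)) ^ (-(α / 2)) := by
  classical
  set c : ℝ := -(α / 2) with hc
  set φ : E → ℝ := fun y => ((‖y‖ ^ 2 : ℝ)) ^ c with hφ
  set A : Set E := {y | a ≤ ‖y‖ ∧ ‖y‖ ≤ R} with hA
  have hposA : ∀ y ∈ A, (0 : ℝ) < ‖y‖ ^ 2 := by
    intro y hy; have : (0:ℝ) < ‖y‖ := lt_of_lt_of_le ha hy.1; positivity
  have hyne : ∀ y ∈ A, y ≠ 0 := by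
    intro y hy h0
    have h1 : a ≤ ‖y‖ := hy.1
    rw [h0, norm_zero] at h1; linarith
  -- A is compact
  have hAeq : A = Metric.closedBall (0:E) R ∩ (Metric.ball (0:E) a)ᶜ := by
    ext y
    simp [hA, Metric.mem_closedBall, Metric.mem_ball, dist_zero_right, not_lt, and_comm]
  have hAc : IsCompact A := by
    rw [hAeq]
    exact (isCompact_closedBall _ _).inter_right
      (Metric.isOpen_ball.isClosed_compl)
  -- the function v = u * (‖·‖²)^(α/2)
  set v : E → ℝ := fun y => u y * ((‖y‖ ^ 2 : ℝ)) ^ (α / 2) with hv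
  have hvc : ContinuousOn v A := by
    apply ((hu.continuous).continuousOn).mul
    apply ContinuousOn.rpow_const
    · exact (continuous_norm.pow 2).continuousOn
    · intro y hy; exact Or.inl (hposA y hy).ne'
  have huv : ∀ y ∈ A, u y = v y * φ y := by
    intro y hy
    have h1 : ((‖y‖ ^ 2 : ℝ)) ^ (α / 2) * ((‖y‖ ^ 2 : ℝ)) ^ c = 1 := by
      rw [← Real.rpow_add (hposA y hy), hc, add_neg_cancel, Real.rpow_zero]
    rw [hv, hφ]
    field_simp
    rw [mul_assoc, h1, mul_one]
  have hφpos : ∀ y ∈ A, (0:ℝ) < φ y := fun y hy => Real.rpow_pos_of_pos (hposA y hy) c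
  -- A nonempty
  have hne : A.Nonempty := by
    have h0n : 0 < n := by omega
    refine ⟨a • EuclideanSpace.single (⟨0, h0n⟩ : Fin n) 1, ?_⟩
    have : ‖a • EuclideanSpace.single (⟨0, h0n⟩ : Fin n) (1:ℝ)‖ = a := by
      rw [norm_smul, EuclideanSpace.norm_single]
      simp [abs_of_pos ha]
    have hmem : a ≤ ‖a • EuclideanSpace.single (⟨0, h0n⟩ : Fin n) (1:ℝ)‖ ∧
        ‖a • EuclideanSpace.single (⟨0, h0n⟩ : Fin n) (1:ℝ)‖ ≤ R := by
      rw [this]; exact ⟨le_refl a, le_of_lt haR⟩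
    exact hmem
  obtain ⟨x₁, hx₁A, hmax⟩ := hAc.exists_isMaxOn hne hvc
  set μ : ℝ := v x₁ with hμ
  have hxA : x ∈ A := ⟨hax, hxR⟩
  by_cases hcase : μ ≤ K
  · -- done
    have := hmax hxA
    have hvx : v x ≤ K := le_trans this hcase
    calc u x = v x * φ x := huv x hxA
    _ ≤ K * φ x := mul_le_mul_of_nonneg_right hvx (hφpos x hxA).le
  · push_neg at hcase
    exfalso
    have hμpos : 0 < μ := lt_trans hK hcase
    -- x₁ is in the open annulus
    have hbdd : ∀ y ∈ A, (‖y‖ = a ∨ ‖y‖ = R) → v y ≤ K := by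
      intro y hy hyb
      have h1 : u y ≤ K * φ y := hbd y hyb
      have h2 : v y * φ y ≤ K * φ y := by rw [← huv y hy]; exact h1
      exact le_of_mul_le_mul_right (by linarith [h2]) (hφpos y hy)
    have hx₁i : a < ‖x₁‖ ∧ ‖x₁‖ < R := by
      rcases lt_or_eq_of_le hx₁A.1 with h | h
      · rcases lt_or_eq_of_le hx₁A.2 with h' | h'
        · exact ⟨h, h'⟩
        · exact absurd (hbdd x₁ hx₁A (Or.inr h')) (not_le.2 hcase)
      · exact absurd (hbdd x₁ hx₁A (Or.inl h.symm)) (not_le.2 hcase)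
    set U : Set E := {y | a < ‖y‖ ∧ ‖y‖ < R} with hU
    have hUopen : IsOpen U := by
      have : U = (fun y : E => ‖y‖) ⁻¹' (Set.Ioo a R) := rfl
      rw [this]
      exact isOpen_Ioo.preimage continuous_norm
    have hUA : U ⊆ A := fun y hy => ⟨le_of_lt hy.1, le_of_lt hy.2⟩
    -- w has a local max at x₁
    set w : E → ℝ := fun y => u y - μ * φ y with hw
    have hwmax : IsLocalMax w x₁ := by
      have hUx : U ∈ nhds x₁ := hUopen.mem_nhds hx₁i
      filter_upwards [hUx] with y hy
      have hyA := hUA hy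
      have h1 : v y ≤ μ := hmax hyA
      have hwy : w y = (v y - μ) * φ y := by
        rw [hw]; dsimp only; rw [huv y hyA]; ring
      have hwx₁ : w x₁ = (μ - μ) * φ x₁ := by
        rw [hw]; dsimp only; rw [huv x₁ hx₁A]; ring
      rw [hwy, hwx₁]
      have : v y - μ ≤ 0 := by linarith
      nlinarith [hφpos y hyA, this]
    -- Laplacian of w at x₁ is ≤ 0
    have hx₁ne : x₁ ≠ 0 := hyne x₁ hx₁A
    have hwcd : ContDiffOn ℝ 2 w {(0:E)}ᶜ :=
      (hu.contDiffOn).sub (contDiffOn_const.mul (contDiffOn_phi c))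
    have hΔw : euclLaplacian w x₁ ≤ 0 := by
      apply Finset.sum_nonpos
      intro i _
      exact secondDerivAt_nonpos isOpen_compl_singleton hwcd (by simpa using hx₁ne) hwmax _
    -- Laplacian of w via linearity
    have hsplit : euclLaplacian w x₁ = euclLaplacian u x₁ - μ * euclLaplacian φ x₁ := by
      rw [euclLaplacian, euclLaplacian, euclLaplacian, Finset.mul_sum,
        ← Finset.sum_sub_distrib]
      apply Finset.sum_congr rfl
      intro i _
      have hφnear : ∀ᶠ q in nhds x₁, DifferentiableAt ℝ φ q := by
        filter_upwards [isOpen_compl_singleton.mem_nhds (by simpa using hx₁ne)] with q hq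
        exact (hasFDerivAt_phi c (by simpa using hq)).differentiableAt
      exact secondDerivAt_sub u φ μ hu hφnear
        (differentiableAt_fderiv_phi c hx₁ne i)
    -- compute
    have hΔφ : euclLaplacian φ x₁ = 2 * c * (2 * (c - 1) + n) * ((‖x₁‖ ^ 2 : ℝ)) ^ (c - 1) :=
      euclLaplacian_phi c hx₁ne
    have hs1 : (0:ℝ) < ‖x₁‖ ^ 2 := hposA x₁ hx₁A
    have hux₁ : u x₁ = μ * φ x₁ := by rw [huv x₁ hx₁A]
    have hupos : 0 < u x₁ := by rw [hux₁]; exact mul_pos hμpos (hφpos x₁ hx₁A)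
    have hfb : f x₁ * u x₁ ≤ C₁ / ‖x₁‖ ^ 2 * u x₁ :=
      mul_le_mul_of_nonneg_right (le_trans (le_abs_self _) (hf x₁ hx₁ne)) hupos.le
    have hrpow : φ x₁ / ‖x₁‖ ^ 2 = ((‖x₁‖ ^ 2 : ℝ)) ^ (c - 1) := by
      rw [hφ]; dsimp only; rw [Real.rpow_sub_one hs1.ne']
    have hβ : 0 < α * ((n : ℝ) - 2 - α) := by
      apply mul_pos hα0; linarith
    -- final contradiction
    have hpde₁ := hpde x₁
    rw [hsplit, hpde₁, hΔφ] at hΔw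
    have hkey : -(C₁ / ‖x₁‖ ^ 2 * u x₁) - μ * (2 * c * (2 * (c - 1) + n)
        * ((‖x₁‖ ^ 2 : ℝ)) ^ (c - 1)) ≤ 0 := by
      have h5 := neg_le_neg hfb
      have h6 : -(C₁ / ‖x₁‖ ^ 2 * u x₁) - μ * (2 * c * (2 * (c - 1) + ↑n)
          * ((‖x₁‖ ^ 2 : ℝ)) ^ (c - 1)) ≤ -(f x₁ * u x₁) - μ * (2 * c * (2 * (c - 1) + ↑n)
          * ((‖x₁‖ ^ 2 : ℝ)) ^ (c - 1)) := by linarith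
      exact le_trans h6 hΔw
    rw [hux₁] at hkey
    have hexp : C₁ / ‖x₁‖ ^ 2 * (μ * φ x₁) = C₁ * μ * ((‖x₁‖ ^ 2 : ℝ)) ^ (c - 1) := by
      rw [← hrpow]; field_simp
    rw [hexp] at hkey
    have h2c : 2 * c * (2 * (c - 1) + (n:ℝ)) = -(α * ((n:ℝ) - 2 - α)) := by
      rw [hc]; ring
    rw [h2c] at hkey
    -- hkey : -(C₁ μ s^{c-1}) - μ * (-(β) * s^{c-1}) ≤ 0, i.e. μ (β - C₁) s^{c-1} ≤ 0
    have hrp : 0 < ((‖x₁‖ ^ 2 : ℝ)) ^ (c - 1) := Real.rpow_pos_of_pos hs1 _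
    nlinarith [mul_pos (mul_pos hμpos (by linarith : (0:ℝ) < α * ((n:ℝ) - 2 - α) - C₁)) hrp]

lemma secondDerivAt_neg {F : Type*} [NormedAddCommGroup F] [NormedSpace ℝ F]
    (u : F → ℝ) (hu : ContDiff ℝ 2 u) (x v : F) :
    secondDerivAt (fun y => -u y) x v = -secondDerivAt u x v := by
  have hφnear : ∀ᶠ q in nhds x, DifferentiableAt ℝ u q :=
    Eventually.of_forall fun q => (hu.differentiable (by norm_num)) q
  have hφ2 : DifferentiableAt ℝ (fun q => fderiv ℝ u q v) x := by
    have h1 : ContDiff ℝ 1 (fderiv ℝ u) := hu.fderiv_right (by norm_num)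
    exact (ContinuousLinearMap.apply ℝ ℝ v).differentiableAt.comp x
      (h1.differentiable (by norm_num) x)
  have h := secondDerivAt_sub (fun _ : F => (0:ℝ)) u 1 contDiff_const hφnear hφ2
  have h0 : secondDerivAt (fun _ : F => (0:ℝ)) x v = 0 := by
    simp [secondDerivAt, fderiv_const]
  have hfun : (fun y : F => (0:ℝ) - 1 * u y) = fun y => -u y := by
    funext y; ring
  rw [hfun] at h
  rw [h, h0]; ring

lemma euclLaplacian_neg {n : ℕ} (u : EuclideanSpace ℝ (Fin n) → ℝ)
    (hu : ContDiff ℝ 2 u) (x : EuclideanSpace ℝ (Fin n)) :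
    euclLaplacian (fun y => -u y) x = -euclLaplacian u x := by
  rw [euclLaplacian, euclLaplacian, ← Finset.sum_neg_distrib]
  exact Finset.sum_congr rfl fun i _ => secondDerivAt_neg u hu x _

lemma sq_rpow {N : ℝ} (hN : 0 ≤ N) (c : ℝ) : ((N ^ 2 : ℝ)) ^ c = N ^ (2 * c) := by
  rw [← Real.rpow_natCast N 2, ← Real.rpow_mul hN]
  norm_num

/-- Liouville-type theorem for the Schrödinger operator `Δ + f` with potential of
quadratic decay and solution of polynomial decay. -/
theorem liouville_schrodinger (n : ℕ) (hn : 3 ≤ n) (ε : ℝ) (hε : 0 < ε) :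
    ∃ δ > (0 : ℝ), ∀ (u f : EuclideanSpace ℝ (Fin n) → ℝ) (C₁ C₂ : ℝ),
      ContDiff ℝ 2 u → Continuous f →
      (∀ x, euclLaplacian u x = -(f x * u x)) →
      0 < C₁ → C₁ ≤ δ → 0 < C₂ →
      (∀ x, x ≠ 0 → |f x| ≤ C₁ / ‖x‖ ^ 2) →
      (∀ x, x ≠ 0 → |u x| ≤ C₂ / ‖x‖ ^ ε) →
      ∀ x, u x = 0 := by
  have hn3 : (3 : ℝ) ≤ (n : ℝ) := by exact_mod_cast hn
  set α : ℝ := min (ε / 2) (1 / 2) with hαdef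
  have hα0 : 0 < α := lt_min (by linarith) (by norm_num)
  have hαhalf : α ≤ 1 / 2 := min_le_right _ _
  have hαε : α < ε := lt_of_le_of_lt (min_le_left _ _) (by linarith)
  have hαn : α < (n : ℝ) - 2 := by linarith
  have hβ : 0 < (n : ℝ) - 2 - α := by linarith
  refine ⟨α * ((n : ℝ) - 2 - α) / 2, div_pos (mul_pos hα0 hβ) two_pos, ?_⟩
  intro u f C₁ C₂ hu hfc hpde hC₁0 hC₁δ hC₂ hfb hub
  -- bound for u on the closed unit ball
  obtain ⟨M, hM⟩ := (isCompact_closedBall (0 : EuclideanSpace ℝ (Fin n)) 1).exists_bound_of_continuousOn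
    hu.continuous.continuousOn
  set M' : ℝ := M + 1 with hM'def
  have hM' : 0 < M' := by
    have h0 := hM 0 (by simp)
    have := norm_nonneg (u 0)
    simp only [hM'def]; linarith
  have hMle : ∀ y : EuclideanSpace ℝ (Fin n), ‖y‖ ≤ 1 → |u y| ≤ M' := by
    intro y hy
    have := hM y (by simpa [Metric.mem_closedBall, dist_zero_right] using hy)
    rw [Real.norm_eq_abs] at this
    linarith
  -- the PDE for -u
  have hu' : ContDiff ℝ 2 (fun y => -u y) := hu.neg
  have hpde' : ∀ x, euclLaplacian (fun y => -u y) x = -(f x * (-u x)) := by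
    intro x; rw [euclLaplacian_neg u hu, hpde]; ring
  -- key quantitative estimate
  have key : ∀ x : EuclideanSpace ℝ (Fin n), x ≠ 0 → ∀ a R : ℝ, 0 < a → a ≤ 1 →
      a ≤ ‖x‖ → ‖x‖ ≤ R → a + 1 ≤ R →
      |u x| ≤ (M' * a ^ α + C₂ * R ^ (α - ε)) * ‖x‖ ^ (-α) := by
    intro x hx a R ha ha1 hax hxR haR1
    have haR : a < R := by linarith
    have hR0 : 0 < R := by linarith
    set K : ℝ := max (M' * a ^ α) (C₂ * R ^ (α - ε)) with hKdef
    have hK : 0 < K := lt_max_of_lt_left (mul_pos hM' (Real.rpow_pos_of_pos ha α))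
    have hbd : ∀ y : EuclideanSpace ℝ (Fin n), ‖y‖ = a ∨ ‖y‖ = R →
        |u y| ≤ K * ((‖y‖ ^ 2 : ℝ)) ^ (-(α / 2)) := by
      intro y hy
      have hrw : ((‖y‖ ^ 2 : ℝ)) ^ (-(α / 2)) = ‖y‖ ^ (-α) := by
        rw [sq_rpow (norm_nonneg y), show (2:ℝ) * -(α/2) = -α by ring]
      rw [hrw]
      rcases hy with hy | hy
      · rw [hy]
        have h1 : |u y| ≤ M' := hMle y (by rw [hy]; exact ha1)
        have h2 : M' = (M' * a ^ α) * a ^ (-α) := by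
          rw [mul_assoc, ← Real.rpow_add ha, add_neg_cancel, Real.rpow_zero, mul_one]
        calc |u y| ≤ M' := h1
        _ = (M' * a ^ α) * a ^ (-α) := h2
        _ ≤ K * a ^ (-α) := by
            apply mul_le_mul_of_nonneg_right (le_max_left _ _)
              (Real.rpow_pos_of_pos ha _).le
      · rw [hy]
        have hyne : y ≠ 0 := by
          intro h0; rw [h0, norm_zero] at hy; linarith
        have h1 : |u y| ≤ C₂ / R ^ ε := by
          have := hub y hyne; rwa [hy] at this
        have h2 : C₂ / R ^ ε = (C₂ * R ^ (α - ε)) * R ^ (-α) := by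
          rw [mul_assoc, ← Real.rpow_add hR0, div_eq_mul_inv, ← Real.rpow_neg hR0.le]
          ring_nf
        calc |u y| ≤ C₂ / R ^ ε := h1
        _ = (C₂ * R ^ (α - ε)) * R ^ (-α) := h2
        _ ≤ K * R ^ (-α) := by
            apply mul_le_mul_of_nonneg_right (le_max_right _ _)
              (Real.rpow_pos_of_pos hR0 _).le
    have h1 : u x ≤ K * ((‖x‖ ^ 2 : ℝ)) ^ (-(α / 2)) :=
      annulus_bound hn hu hpde hα0 hαn hC₁δ hfb ha haR hK
        (fun y hy => le_trans (le_abs_self _) (hbd y hy)) hax hxR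
    have h2 : -u x ≤ K * ((‖x‖ ^ 2 : ℝ)) ^ (-(α / 2)) :=
      annulus_bound hn hu' hpde' hα0 hαn hC₁δ hfb ha haR hK
        (fun y hy => le_trans (neg_le_abs _) (hbd y hy)) hax hxR
    have h3 : |u x| ≤ K * ((‖x‖ ^ 2 : ℝ)) ^ (-(α / 2)) := abs_le.2 ⟨by linarith, h1⟩
    have hrw : ((‖x‖ ^ 2 : ℝ)) ^ (-(α / 2)) = ‖x‖ ^ (-α) := by
      rw [sq_rpow (norm_nonneg x), show (2:ℝ) * -(α/2) = -α by ring]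
    rw [hrw] at h3
    have hKle : K ≤ M' * a ^ α + C₂ * R ^ (α - ε) := by
      apply max_le
      · nlinarith [mul_pos hC₂ (Real.rpow_pos_of_pos hR0 (α - ε))]
      · nlinarith [mul_pos hM' (Real.rpow_pos_of_pos ha α)]
    calc |u x| ≤ K * ‖x‖ ^ (-α) := h3
    _ ≤ (M' * a ^ α + C₂ * R ^ (α - ε)) * ‖x‖ ^ (-α) :=
        mul_le_mul_of_nonneg_right hKle (Real.rpow_pos_of_pos (by
          have : (0:ℝ) < ‖x‖ := norm_pos_iff.2 hx
          exact this) _).le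
  -- conclude u = 0 away from the origin
  have hzero : ∀ x : EuclideanSpace ℝ (Fin n), x ≠ 0 → u x = 0 := by
    intro x hx
    have hxn : 0 < ‖x‖ := norm_pos_iff.2 hx
    have hxα : 0 < ‖x‖ ^ α := Real.rpow_pos_of_pos hxn α
    have hmain : ∀ η : ℝ, 0 < η → |u x| ≤ η := by
      intro η hη
      set T : ℝ := η / 2 * ‖x‖ ^ α / M' with hTdef
      have hT : 0 < T := by positivity
      set a : ℝ := min (min 1 ‖x‖) (T ^ (1 / α)) with hadef
      have ha0 : 0 < a :=
        lt_min (lt_min one_pos hxn) (Real.rpow_pos_of_pos hT _)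
      have ha1 : a ≤ 1 := le_trans (min_le_left _ _) (min_le_left _ _)
      have hax : a ≤ ‖x‖ := le_trans (min_le_left _ _) (min_le_right _ _)
      have haT : a ^ α ≤ T := by
        have h1 : a ^ α ≤ (T ^ (1 / α)) ^ α :=
          Real.rpow_le_rpow ha0.le (min_le_right _ _) hα0.le
        rwa [← Real.rpow_mul hT.le, one_div_mul_cancel hα0.ne', Real.rpow_one] at h1
      set S : ℝ := (η / 2 * ‖x‖ ^ α / C₂)⁻¹ with hSdef
      have hS : 0 < S := by positivity
      have hεα : 0 < ε - α := by linarith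
      set R : ℝ := max (max ‖x‖ (a + 1)) (max 1 (S ^ (1 / (ε - α)))) with hRdef
      have hxR : ‖x‖ ≤ R := le_trans (le_max_left _ _) (le_max_left _ _)
      have haR1 : a + 1 ≤ R := le_trans (le_max_right _ _) (le_max_left _ _)
      have hR0 : 0 < R := by
        have : (1:ℝ) ≤ R := le_trans (le_max_left _ _) (le_max_right _ _)
        linarith
      have hRS : S ≤ R ^ (ε - α) := by
        have h1 : (S ^ (1 / (ε - α))) ^ (ε - α) ≤ R ^ (ε - α) :=
          Real.rpow_le_rpow (Real.rpow_pos_of_pos hS _).le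
            (le_trans (le_max_right _ _) (le_max_right _ _)) hεα.le
        rwa [← Real.rpow_mul hS.le, one_div_mul_cancel hεα.ne', Real.rpow_one] at h1
      have hRae : R ^ (α - ε) ≤ S⁻¹ := by
        rw [show α - ε = -(ε - α) by ring, Real.rpow_neg hR0.le]
        exact inv_anti₀ hS hRS
      have hest := key x hx a R ha0 ha1 hax hxR haR1
      have hMT : M' * a ^ α ≤ η / 2 * ‖x‖ ^ α := by
        have := mul_le_mul_of_nonneg_left haT hM'.le
        rw [hTdef] at this
        calc M' * a ^ α ≤ M' * (η / 2 * ‖x‖ ^ α / M') := this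
        _ = η / 2 * ‖x‖ ^ α := by field_simp
      have hCS : C₂ * R ^ (α - ε) ≤ η / 2 * ‖x‖ ^ α := by
        have := mul_le_mul_of_nonneg_left hRae hC₂.le
        rw [hSdef, inv_inv] at this
        calc C₂ * R ^ (α - ε) ≤ C₂ * (η / 2 * ‖x‖ ^ α / C₂) := this
        _ = η / 2 * ‖x‖ ^ α := by field_simp
      have hxinv : ‖x‖ ^ α * ‖x‖ ^ (-α) = 1 := by
        rw [← Real.rpow_add hxn, add_neg_cancel, Real.rpow_zero]
      have hxna : 0 < ‖x‖ ^ (-α) := Real.rpow_pos_of_pos hxn _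
      calc |u x| ≤ (M' * a ^ α + C₂ * R ^ (α - ε)) * ‖x‖ ^ (-α) := hest
      _ ≤ (η / 2 * ‖x‖ ^ α + η / 2 * ‖x‖ ^ α) * ‖x‖ ^ (-α) := by
          apply mul_le_mul_of_nonneg_right (by linarith) hxna.le
      _ = η * (‖x‖ ^ α * ‖x‖ ^ (-α)) := by ring
      _ = η := by rw [hxinv, mul_one]
    by_contra habs
    have h1 : 0 < |u x| := abs_pos.2 habs
    have := hmain (|u x| / 2) (by linarith)
    linarith
  -- the origin, by continuity
  intro x
  by_cases hx : x = 0
  · subst hx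
    have h0n : 0 < n := by omega
    set e : EuclideanSpace ℝ (Fin n) := EuclideanSpace.single (⟨0, h0n⟩ : Fin n) 1 with he
    have he0 : e ≠ 0 := by
      intro h
      have : ‖e‖ = 1 := by rw [he, EuclideanSpace.norm_single]; norm_num
      rw [h, norm_zero] at this; norm_num at this
    set g : ℝ → ℝ := fun t => u (t • e) with hg
    have hgc : Continuous g := hu.continuous.comp (continuous_id.smul continuous_const)
    have hgeq : g = fun _ => (0:ℝ) := by
      apply Continuous.ext_on (dense_compl_singleton (0:ℝ)) hgc continuous_const
      intro t ht
      exact hzero _ (smul_ne_zero ht he0)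
    have := congrFun hgeq 0
    simpa [hg] using this
  · exact hzero x hx
end

section
/- Let n ≥ 1 and b > 1. There exists a constant C > 0, depending only on b, such that for every p > 0 and every smooth compactly supported function f : ℝⁿ × ℝ → ℝ whose support is contained in the open half-space ℝⁿ × (0, ∞), one has ∫_{ℝⁿ × (0,p]} x^{1−2b} f(y,x)² dy dx + p^{2−2b} ∫_{ℝⁿ} f(y,p)² dy ≤ C ∫_{ℝⁿ × (0,p]} x^{3−2b} ‖∇f(y,x)‖² dy dx, where ∇f is the full Euclidean gradient of f and all integrals are with respect to Lebesgue measure. -/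
open MeasureTheory Set

lemma oneD (b : ℝ) (hb : 1 < b) (p δ : ℝ) (hδ : 0 < δ) (hδp : δ ≤ p)
    (u : ℝ → ℝ) (hu : ContDiff ℝ (⊤ : ℕ∞) u) (h0 : ∀ x ≤ δ, u x = 0) :
    (∫ x in Set.Ioc (0:ℝ) p, x ^ (1-2*b) * u x ^ 2) + p ^ (2-2*b) * u p ^ 2
      ≤ (1/(b-1)^2 + 1/(b-1)) * ∫ x in Set.Ioc (0:ℝ) p, x ^ (3-2*b) * (deriv u x)^2 := by
  have hb1 : (0:ℝ) < b - 1 := by linarith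
  have hucont : Continuous u := hu.continuous
  have hdu : Continuous (deriv u) := hu.continuous_deriv (by simp)
  have hudiff : Differentiable ℝ u := hu.differentiable (by simp)
  have hpos : ∀ x ∈ Icc δ p, (0:ℝ) < x := fun x hx => lt_of_lt_of_le hδ hx.1
  have hwcont : ∀ a : ℝ, ContinuousOn (fun x : ℝ => x ^ a) (Icc δ p) := by
    intro a
    exact ContinuousOn.rpow_const continuousOn_id fun x hx => Or.inl (hpos x hx).ne'
  -- reduce set integrals from Ioc 0 p to Ioc δ p
  have hred : ∀ g : ℝ → ℝ, IntegrableOn g (Ioc δ p) →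
      (∀ᵐ x ∂volume, x ∈ Ioc (0:ℝ) δ → g x = 0) →
      ∫ x in Ioc (0:ℝ) p, g x = ∫ x in Ioc δ p, g x := by
    intro g hint hg
    have hsplit : Ioc (0:ℝ) δ ∪ Ioc δ p = Ioc (0:ℝ) p := Set.Ioc_union_Ioc_eq_Ioc hδ.le hδp
    have hae : g =ᶠ[ae (volume.restrict (Ioc (0:ℝ) δ))] fun _ => 0 := by
      rw [Filter.EventuallyEq, ae_restrict_iff' measurableSet_Ioc]; exact hg
    rw [← hsplit, setIntegral_union (Set.Ioc_disjoint_Ioc_of_le le_rfl) measurableSet_Ioc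
        ((integrableOn_congr_fun_ae hae).mpr (integrableOn_zero)) hint]
    rw [integral_congr_ae hae, integral_zero, zero_add]
  have hii : ∀ g : ℝ → ℝ, ContinuousOn g (Icc δ p) → IntervalIntegrable g volume δ p := by
    intro g hg
    exact (hg.mono (by rw [Set.uIcc_of_le hδp])).intervalIntegrable
  have hcont1 : ContinuousOn (fun x : ℝ => x ^ (1-2*b) * u x ^ 2) (Icc δ p) :=
    (hwcont _).mul ((hucont.pow 2).continuousOn)
  have hcont3 : ContinuousOn (fun x : ℝ => x ^ (3-2*b) * (deriv u x) ^ 2) (Icc δ p) :=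
    (hwcont _).mul ((hdu.pow 2).continuousOn)
  have hcontX : ContinuousOn (fun x : ℝ => x ^ (2-2*b) * (2 * u x * deriv u x)) (Icc δ p) :=
    (hwcont _).mul (((continuous_const.mul hucont).mul hdu).continuousOn)
  have hcontW : ContinuousOn
      (fun x : ℝ => (2-2*b) * (x ^ (1-2*b) * u x ^ 2) + x ^ (2-2*b) * (2 * u x * deriv u x))
      (Icc δ p) :=
    (continuousOn_const.mul hcont1).add hcontX
  -- FTC
  have key : ∫ x in δ..p,
      ((2-2*b) * (x ^ (1-2*b) * u x ^ 2) + x ^ (2-2*b) * (2 * u x * deriv u x))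
      = p ^ (2-2*b) * u p ^ 2 := by
    have hder : ∀ x ∈ Set.uIcc δ p, HasDerivAt (fun x : ℝ => x ^ (2-2*b) * u x ^ 2)
        ((2-2*b) * (x ^ (1-2*b) * u x ^ 2) + x ^ (2-2*b) * (2 * u x * deriv u x)) x := by
      intro x hx
      rw [Set.uIcc_of_le hδp] at hx
      have hx0 : x ≠ 0 := (hpos x hx).ne'
      have h1 : HasDerivAt (fun x : ℝ => x ^ (2-2*b)) ((2-2*b) * x ^ (2-2*b-1)) x :=
        Real.hasDerivAt_rpow_const (Or.inl hx0)
      have h2 : HasDerivAt (fun x => u x ^ 2) (2 * u x ^ 1 * deriv u x) x :=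
        ((hudiff x).hasDerivAt).pow 2
      have h : HasDerivAt (fun x : ℝ => x ^ (2-2*b) * u x ^ 2) _ x := h1.mul h2
      rw [show (2-2*b-1 : ℝ) = 1-2*b by ring] at h
      convert h using 1
      ring
    have := intervalIntegral.integral_eq_sub_of_hasDerivAt hder (hii _ hcontW)
    rw [this]
    norm_num [h0 δ le_rfl]
  -- pointwise AM-GM
  have ptwise : ∀ x ∈ Icc δ p, x ^ (2-2*b) * (2 * u x * deriv u x)
      ≤ (b-1) * (x ^ (1-2*b) * u x ^ 2) + (1/(b-1)) * (x ^ (3-2*b) * (deriv u x) ^ 2) := by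
    intro x hx
    have hx0 : (0:ℝ) < x := hpos x hx
    have hA : (0:ℝ) < x ^ (1-2*b) := Real.rpow_pos_of_pos hx0 _
    have hC : (0:ℝ) < x ^ (3-2*b) := Real.rpow_pos_of_pos hx0 _
    have hB : x ^ (2-2*b) * x ^ (2-2*b) = x ^ (1-2*b) * x ^ (3-2*b) := by
      rw [← Real.rpow_add hx0, ← Real.rpow_add hx0]
      congr 1
      ring
    have key := sq_nonneg ((b-1) * x ^ (1-2*b) * u x - x ^ (2-2*b) * deriv u x)
    have e1 : (b-1) * ((1/(b-1)) * (x ^ (3-2*b) * (deriv u x)^2)) = x ^ (3-2*b) * (deriv u x)^2 := by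
      field_simp
    rw [← mul_le_mul_iff_right₀ hb1, mul_add, e1]
    nlinarith [key, hB, hA, hC, mul_pos hA hC]
  have hmono : ∫ x in δ..p, x ^ (2-2*b) * (2 * u x * deriv u x)
      ≤ ∫ x in δ..p, ((b-1) * (x ^ (1-2*b) * u x ^ 2) + (1/(b-1)) * (x ^ (3-2*b) * (deriv u x) ^ 2)) :=
    intervalIntegral.integral_mono_on hδp (hii _ hcontX)
      (hii _ ((continuousOn_const.mul hcont1).add (continuousOn_const.mul hcont3)))
      ptwise
  rw [intervalIntegral.integral_add ((hii _ hcont1).const_mul _) ((hii _ hcont3).const_mul _),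
    intervalIntegral.integral_const_mul, intervalIntegral.integral_const_mul] at hmono
  -- assemble arithmetic on [δ, p]
  set A := ∫ x in δ..p, x ^ (1-2*b) * u x ^ 2 with hAdef
  set D := ∫ x in δ..p, x ^ (3-2*b) * (deriv u x) ^ 2 with hDdef
  set P := p ^ (2-2*b) * u p ^ 2 with hPdef
  have hkey2 : P = (2-2*b) * A + ∫ x in δ..p, x ^ (2-2*b) * (2 * u x * deriv u x) := by
    rw [← key, intervalIntegral.integral_add ((hii _ hcont1).const_mul _) (hii _ hcontX),
      intervalIntegral.integral_const_mul]
  have hA0 : 0 ≤ A := intervalIntegral.integral_nonneg hδp fun x hx =>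
    mul_nonneg (Real.rpow_nonneg (hpos x hx).le _) (sq_nonneg _)
  have hD0 : 0 ≤ D := intervalIntegral.integral_nonneg hδp fun x hx =>
    mul_nonneg (Real.rpow_nonneg (hpos x hx).le _) (sq_nonneg _)
  have hP0 : 0 ≤ P := by
    have hp0 : (0:ℝ) < p := lt_of_lt_of_le hδ hδp
    positivity
  have hfin : (b-1) * A + P ≤ (1/(b-1)) * D := by linarith
  -- translate goal to A, P, D
  have hg1 : ∫ x in Ioc (0:ℝ) p, x ^ (1-2*b) * u x ^ 2 = A := by
    rw [hred _ ((hcont1.integrableOn_compact isCompact_Icc).mono_set Ioc_subset_Icc_self)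
      (Filter.Eventually.of_forall fun x hx => by rw [h0 x hx.2]; ring),
      hAdef, intervalIntegral.integral_of_le hδp]
  have hne : ∀ᵐ x : ℝ ∂volume, x ≠ δ := by
    filter_upwards [compl_mem_ae_iff.mpr (measure_singleton δ)] with x hx
    simpa using hx
  have hg3 : ∫ x in Ioc (0:ℝ) p, x ^ (3-2*b) * (deriv u x) ^ 2 = D := by
    rw [hred _ ((hcont3.integrableOn_compact isCompact_Icc).mono_set Ioc_subset_Icc_self)
      (hne.mono fun x hxne hx => by
        have hxlt : x < δ := lt_of_le_of_ne hx.2 hxne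
        have : deriv u x = 0 := by
          have heq : u =ᶠ[nhds x] fun _ => (0:ℝ) :=
            Filter.eventuallyEq_of_mem (Iio_mem_nhds hxlt) fun y hy => h0 y (le_of_lt hy)
          rw [heq.deriv_eq, deriv_const]
        rw [this]; ring),
      hDdef, intervalIntegral.integral_of_le hδp]
  rw [hg1, hg3]
  -- final arithmetic
  have h1b : (0:ℝ) < 1/(b-1) := by positivity
  have hfin2 := mul_le_mul_of_nonneg_left hfin h1b.le
  have e2 : (1/(b-1)) * ((b-1) * A + P) = A + (1/(b-1)) * P := by
    field_simp
  have e3 : (1/(b-1)) * ((1/(b-1)) * D) = (1/(b-1)^2) * D := by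
    rw [pow_two]
    field_simp
  rw [e2, e3] at hfin2
  have hP1 : P ≤ (1/(b-1)) * D := by linarith [hfin, mul_nonneg hb1.le hA0]
  have hQ : 0 ≤ (1/(b-1)) * P := mul_nonneg h1b.le hP0
  linarith [hfin2, hP1, hQ]

section Main
variable {E : Type*} [NormedAddCommGroup E] [InnerProductSpace ℝ E]
  [FiniteDimensional ℝ E] [MeasurableSpace E] [BorelSpace E]

-- helper: compact support from support inside a compact closed set
lemma hardy_hcs_of {α : Type*} [TopologicalSpace α] {g : α → ℝ} {C : Set α}
    (hC : IsCompact C) (hCc : IsClosed C) (h : Function.support g ⊆ C) :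
    HasCompactSupport g :=
  IsCompact.of_isClosed_subset hC isClosed_closure (closure_minimal h hCc)

theorem hardy_main (b : ℝ) (hb : 1 < b) (p : ℝ) (hp : 0 < p)
    (f : E × ℝ → ℝ) (hf : ContDiff ℝ (⊤ : ℕ∞) f) (hsupp : HasCompactSupport f)
    (hsub : tsupport f ⊆ {q : E × ℝ | 0 < q.2}) :
    (∫ x in Set.Ioc (0 : ℝ) p, ∫ y, x ^ (1 - 2 * b) * (f (y, x)) ^ 2)
        + p ^ (2 - 2 * b) * ∫ y, (f (y, p)) ^ 2
      ≤ (1/(b-1)^2 + 1/(b-1)) * ∫ x in Set.Ioc (0 : ℝ) p, ∫ y,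
          x ^ (3 - 2 * b) *
            (‖fderiv ℝ (fun y' => f (y', x)) y‖ ^ 2
              + (deriv (fun t => f (y, t)) x) ^ 2) := by
  have hb1 : (0:ℝ) < b - 1 := by linarith
  set C0 : ℝ := 1/(b-1)^2 + 1/(b-1) with hC0
  have hC0pos : 0 < C0 := by positivity
  -- find δ
  obtain ⟨δ, hδ0, hδp, hKout⟩ :
      ∃ δ : ℝ, 0 < δ ∧ δ ≤ p ∧ ∀ q : E × ℝ, q.2 ≤ δ → q ∉ tsupport f := by
    rcases Set.eq_empty_or_nonempty (tsupport f) with h | h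
    · exact ⟨p/2, by linarith, by linarith, fun q _ hq => by simp [h] at hq⟩
    · have hScpt : IsCompact (Prod.snd '' tsupport f) := hsupp.image continuous_snd
      obtain ⟨δ₀, hδ₀S, hmin⟩ := hScpt.exists_isLeast (h.image _)
      obtain ⟨q₀, hq₀, hq₀2⟩ := hδ₀S
      have hδ₀pos : 0 < δ₀ := hq₀2 ▸ hsub hq₀
      refine ⟨min (δ₀/2) (p/2), by positivity, by
        calc min (δ₀/2) (p/2) ≤ p/2 := min_le_right _ _
        _ ≤ p := by linarith, fun q hq hqK => ?_⟩
      have h1 : δ₀ ≤ q.2 := hmin ⟨q, hqK, rfl⟩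
      have h2 : q.2 ≤ δ₀/2 := le_trans hq (min_le_left _ _)
      linarith
  have hfzero : ∀ q : E × ℝ, q.2 ≤ δ → f q = 0 :=
    fun q hq => image_eq_zero_of_notMem_tsupport (hKout q hq)
  have hfdzero : ∀ q : E × ℝ, q.2 ≤ δ → fderiv ℝ f q = 0 := fun q hq =>
    Function.notMem_support.mp (fun hmem => hKout q hq (support_fderiv_subset ℝ hmem))
  have hfdiff : Differentiable ℝ f := hf.differentiable (by simp)
  -- partial derivatives as full fderiv
  have hderiv_eq : ∀ (y : E) (x : ℝ),
      deriv (fun t => f (y, t)) x = fderiv ℝ f (y, x) (0, 1) := by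
    intro y x
    have h1 : HasDerivAt (fun t : ℝ => ((y : E), t)) ((0 : E), (1:ℝ)) x :=
      (hasDerivAt_const x y).prodMk (hasDerivAt_id x)
    exact ((hfdiff (y, x)).hasFDerivAt.comp_hasDerivAt x h1).deriv
  have hfd_eq : ∀ (y : E) (x : ℝ),
      fderiv ℝ (fun y' => f (y', x)) y
        = (fderiv ℝ f (y, x)).comp ((ContinuousLinearMap.id ℝ E).prod 0) := by
    intro y x
    have h1 : HasFDerivAt (fun y' : E => (y', x)) ((ContinuousLinearMap.id ℝ E).prod 0) y :=
      (hasFDerivAt_id y).prodMk (hasFDerivAt_const x y)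
    exact ((hfdiff (y, x)).hasFDerivAt.comp y h1).fderiv
  -- weight function
  have hwcont : ∀ a : ℝ, Continuous (fun x : ℝ => max x δ ^ a) := fun a =>
    (continuous_id.max continuous_const).rpow_const
      (fun x => Or.inl (lt_of_lt_of_le hδ0 (le_max_right x δ)).ne')
  -- swapped compact set
  have hKs : IsCompact (Prod.swap ⁻¹' tsupport f : Set (ℝ × E)) :=
    (Homeomorph.prodComm ℝ E).isCompact_preimage.mpr hsupp
  have hKsc : IsClosed (Prod.swap ⁻¹' tsupport f : Set (ℝ × E)) :=
    (isClosed_tsupport f).preimage continuous_swap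
  -- master integrability lemma on the restricted product measure
  have hint : ∀ g : ℝ × E → ℝ, Continuous g → Function.support g ⊆ Prod.swap ⁻¹' tsupport f →
      Integrable g ((volume.restrict (Set.Ioc (0:ℝ) p)).prod volume) := by
    intro g hc hs
    have hcs : HasCompactSupport g := hardy_hcs_of hKs hKsc hs
    have h1 : Integrable g (volume.prod volume) := hc.integrable_of_hasCompactSupport hcs
    have hm : (volume.restrict (Set.Ioc (0:ℝ) p)).prod (volume : Measure E)
        = (volume.prod volume).restrict (Set.Ioc (0:ℝ) p ×ˢ Set.univ) := by
      rw [← Measure.prod_restrict, Measure.restrict_univ]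
    rw [hm]
    exact h1.restrict
  -- ae-congruence lemma
  have haeq : ∀ g G : ℝ × E → ℝ, (∀ q : ℝ × E, q.1 ∈ Set.Ioc (0:ℝ) p → g q = G q) →
      g =ᶠ[ae ((volume.restrict (Set.Ioc (0:ℝ) p)).prod volume)] G := by
    intro g G h
    have hm : (volume.restrict (Set.Ioc (0:ℝ) p)).prod (volume : Measure E)
        = (volume.prod volume).restrict (Set.Ioc (0:ℝ) p ×ˢ Set.univ) := by
      rw [← Measure.prod_restrict, Measure.restrict_univ]
    rw [Filter.EventuallyEq, hm,
      ae_restrict_iff' (measurableSet_Ioc.prod MeasurableSet.univ)]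
    exact Filter.Eventually.of_forall fun q hq => h q hq.1
  -- continuous models
  have hcf : Continuous f := hf.continuous
  have hcfd : Continuous (fderiv ℝ f) := hf.continuous_fderiv (by simp)
  -- integrability of the three integrands
  have hP1int : Integrable (fun q : ℝ × E => q.1 ^ (1-2*b) * f (q.2, q.1) ^ 2)
      ((volume.restrict (Set.Ioc (0:ℝ) p)).prod volume) := by
    refine (hint (fun q : ℝ × E => max q.1 δ ^ (1-2*b) * f (q.2, q.1) ^ 2)
      (((hwcont _).comp continuous_fst).mul
        ((hcf.comp (continuous_snd.prodMk continuous_fst)).pow 2)) ?_).congr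
      (haeq _ _ ?_).symm
    · intro q hq
      simp only [Function.mem_support, ne_eq] at hq
      by_contra hmem
      have h0 : f (q.2, q.1) = 0 := image_eq_zero_of_notMem_tsupport hmem
      exact hq (by rw [h0]; ring)
    · intro q hq
      rcases le_or_gt δ q.1 with h | h
      · rw [max_eq_left h]
      · rw [hfzero (q.2, q.1) h.le]; ring
  have hP3int : Integrable (fun q : ℝ × E => q.1 ^ (3-2*b) * (deriv (fun t => f (q.2, t)) q.1) ^ 2)
      ((volume.restrict (Set.Ioc (0:ℝ) p)).prod volume) := by
    refine (hint (fun q : ℝ × E => max q.1 δ ^ (3-2*b) * (fderiv ℝ f (q.2, q.1) (0, 1)) ^ 2)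
      (((hwcont _).comp continuous_fst).mul
        (((hcfd.comp (continuous_snd.prodMk continuous_fst)).clm_apply continuous_const).pow 2))
      ?_).congr (haeq _ _ ?_).symm
    · intro q hq
      simp only [Function.mem_support, ne_eq] at hq
      by_contra hmem
      refine hq ?_
      rw [show fderiv ℝ f (q.2, q.1) = 0 from
        Function.notMem_support.mp fun hm => hmem (support_fderiv_subset ℝ hm)]
      simp
    · intro q hq
      rw [hderiv_eq]
      rcases le_or_gt δ q.1 with h | h
      · rw [max_eq_left h]
      · rw [hfdzero (q.2, q.1) h.le]; simp
  have hPFint : Integrable (fun q : ℝ × E => q.1 ^ (3-2*b) *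
      (‖fderiv ℝ (fun y' => f (y', q.1)) q.2‖ ^ 2 + (deriv (fun t => f (q.2, t)) q.1) ^ 2))
      ((volume.restrict (Set.Ioc (0:ℝ) p)).prod volume) := by
    refine (hint (fun q : ℝ × E => max q.1 δ ^ (3-2*b) *
      (‖(fderiv ℝ f (q.2, q.1)).comp ((ContinuousLinearMap.id ℝ E).prod 0)‖ ^ 2
        + (fderiv ℝ f (q.2, q.1) (0, 1)) ^ 2))
      (((hwcont _).comp continuous_fst).mul
        ((((hcfd.comp (continuous_snd.prodMk continuous_fst)).clm_comp continuous_const).norm.pow 2).add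
          (((hcfd.comp (continuous_snd.prodMk continuous_fst)).clm_apply continuous_const).pow 2)))
      ?_).congr (haeq _ _ ?_).symm
    · intro q hq
      simp only [Function.mem_support, ne_eq] at hq
      by_contra hmem
      refine hq ?_
      rw [show fderiv ℝ f (q.2, q.1) = 0 from
        Function.notMem_support.mp fun hm => hmem (support_fderiv_subset ℝ hm)]
      simp
    · intro q hq
      rw [hderiv_eq, hfd_eq]
      rcases le_or_gt δ q.1 with h | h
      · rw [max_eq_left h]
      · rw [hfdzero (q.2, q.1) h.le]; simp
  -- per-y one-dimensional Hardy inequality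
  have honeD : ∀ y : E,
      (∫ x in Set.Ioc (0:ℝ) p, x ^ (1-2*b) * f (y, x) ^ 2) + p ^ (2-2*b) * f (y, p) ^ 2
        ≤ C0 * ∫ x in Set.Ioc (0:ℝ) p, x ^ (3-2*b) * (deriv (fun t => f (y, t)) x) ^ 2 := by
    intro y
    exact oneD b hb p δ hδ0 hδp (fun t => f (y, t))
      (hf.comp ((contDiff_const.prodMk contDiff_id)))
      (fun x hx => hfzero (y, x) hx)
  -- integrability of the marginals
  have hAint : Integrable (fun y : E => ∫ x in Set.Ioc (0:ℝ) p, x ^ (1-2*b) * f (y, x) ^ 2) volume :=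
    hP1int.integral_prod_right
  have hDint : Integrable (fun y : E => ∫ x in Set.Ioc (0:ℝ) p,
      x ^ (3-2*b) * (deriv (fun t => f (y, t)) x) ^ 2) volume :=
    hP3int.integral_prod_right
  have hBint : Integrable (fun y : E => p ^ (2-2*b) * f (y, p) ^ 2) volume := by
    have hcs : HasCompactSupport (fun y : E => p ^ (2-2*b) * f (y, p) ^ 2) := by
      refine hardy_hcs_of (hsupp.image continuous_fst)
        ((hsupp.image continuous_fst).isClosed) ?_
      intro y hy
      simp only [Function.mem_support, ne_eq] at hy
      have : f (y, p) ≠ 0 := fun h => hy (by rw [h]; ring)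
      exact ⟨(y, p), subset_tsupport f this, rfl⟩
    exact (Continuous.mul continuous_const
      ((hcf.comp (continuous_id.prodMk continuous_const)).pow 2)).integrable_of_hasCompactSupport hcs
  -- main chain
  have step1 : (∫ x in Set.Ioc (0:ℝ) p, ∫ y, x ^ (1-2*b) * f (y, x) ^ 2)
      = ∫ y, ∫ x in Set.Ioc (0:ℝ) p, x ^ (1-2*b) * f (y, x) ^ 2 :=
    integral_integral_swap hP1int
  have step2 : p ^ (2-2*b) * (∫ y, f (y, p) ^ 2) = ∫ y, p ^ (2-2*b) * f (y, p) ^ 2 :=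
    (integral_const_mul _ _).symm
  have step3 : (∫ y, ∫ x in Set.Ioc (0:ℝ) p, x ^ (3-2*b) * (deriv (fun t => f (y, t)) x) ^ 2)
      = ∫ x in Set.Ioc (0:ℝ) p, ∫ y, x ^ (3-2*b) * (deriv (fun t => f (y, t)) x) ^ 2 :=
    (integral_integral_swap hP3int).symm
  have step4 : (∫ x in Set.Ioc (0:ℝ) p, ∫ y, x ^ (3-2*b) * (deriv (fun t => f (y, t)) x) ^ 2)
      ≤ ∫ x in Set.Ioc (0:ℝ) p, ∫ y, x ^ (3-2*b) *
          (‖fderiv ℝ (fun y' => f (y', x)) y‖ ^ 2 + (deriv (fun t => f (y, t)) x) ^ 2) := by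
    refine integral_mono_ae hP3int.integral_prod_left hPFint.integral_prod_left ?_
    filter_upwards [hP3int.prod_right_ae, hPFint.prod_right_ae,
      ae_restrict_mem measurableSet_Ioc] with x h3 hF hx
    refine integral_mono h3 hF fun y => ?_
    have hw : (0:ℝ) ≤ x ^ (3-2*b) := Real.rpow_nonneg hx.1.le _
    have : (deriv (fun t => f (y, t)) x) ^ 2
        ≤ ‖fderiv ℝ (fun y' => f (y', x)) y‖ ^ 2 + (deriv (fun t => f (y, t)) x) ^ 2 := by
      nlinarith [sq_nonneg ‖fderiv ℝ (fun y' => f (y', x)) y‖]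
    exact mul_le_mul_of_nonneg_left this hw
  calc (∫ x in Set.Ioc (0:ℝ) p, ∫ y, x ^ (1-2*b) * f (y, x) ^ 2)
        + p ^ (2-2*b) * ∫ y, f (y, p) ^ 2
      = ∫ y, ((∫ x in Set.Ioc (0:ℝ) p, x ^ (1-2*b) * f (y, x) ^ 2)
          + p ^ (2-2*b) * f (y, p) ^ 2) := by
        rw [step1, step2, integral_add hAint hBint]
    _ ≤ ∫ y, C0 * ∫ x in Set.Ioc (0:ℝ) p, x ^ (3-2*b) * (deriv (fun t => f (y, t)) x) ^ 2 :=
        integral_mono (hAint.add hBint) (hDint.const_mul _) honeD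
    _ = C0 * ∫ y, ∫ x in Set.Ioc (0:ℝ) p, x ^ (3-2*b) * (deriv (fun t => f (y, t)) x) ^ 2 :=
        integral_const_mul _ _
    _ = C0 * ∫ x in Set.Ioc (0:ℝ) p, ∫ y, x ^ (3-2*b) * (deriv (fun t => f (y, t)) x) ^ 2 := by
        rw [step3]
    _ ≤ _ := mul_le_mul_of_nonneg_left step4 hC0pos.le

end Main

/-- Flat upper-half-space Hardy inequality (Proposition 3.2 in the model case ρ = x):
for `b > 1` there is `C > 0` depending only on `b` such that for every dimension
`n ≥ 1`, every `p > 0` and every smooth compactly supported `f` supported in the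
open upper half-space,
`∫_{ℝⁿ×(0,p]} x^{1−2b} f² + p^{2−2b} ∫_{ℝⁿ} f(·,p)² ≤ C ∫_{ℝⁿ×(0,p]} x^{3−2b} ‖∇f‖²`. -/
theorem hardy_inequality_flat (b : ℝ) (hb : 1 < b) :
    ∃ C > (0 : ℝ), ∀ (n : ℕ), 1 ≤ n → ∀ p : ℝ, 0 < p →
      ∀ f : EuclideanSpace ℝ (Fin n) × ℝ → ℝ,
        ContDiff ℝ (⊤ : ℕ∞) f → HasCompactSupport f →
        tsupport f ⊆ {q : EuclideanSpace ℝ (Fin n) × ℝ | 0 < q.2} →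
        (∫ x in Set.Ioc (0 : ℝ) p, ∫ y, x ^ (1 - 2 * b) * (f (y, x)) ^ 2)
            + p ^ (2 - 2 * b) * ∫ y, (f (y, p)) ^ 2
          ≤ C * ∫ x in Set.Ioc (0 : ℝ) p, ∫ y,
              x ^ (3 - 2 * b) *
                (‖fderiv ℝ (fun y' => f (y', x)) y‖ ^ 2
                  + (deriv (fun t => f (y, t)) x) ^ 2) := by
  have hb1 : (0:ℝ) < b - 1 := by linarith
  refine ⟨1/(b-1)^2 + 1/(b-1), by positivity, ?_⟩
  intro n _ p hp f hf hsupp hsub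
  exact hardy_main b hb p hp f hf hsupp hsub
end

section
/- Let a, c ∈ ℝ and let α, β ∈ ℝ satisfy α + β = 1 − a and α·β = c (so α and β are the roots of t² − (1−a)t + c = 0). Let g : (0, ∞) → ℝ be twice differentiable and satisfy the differential inequality g″(r) + (a/r)·g′(r) + (c/r²)·g(r) ≥ 0 for all r > 0. If lim_{r→0⁺} ( g′(r)·r^{1−β} − α·g(r)·r^{−β} ) = 0, then the function r ↦ g(r)/r^α is nondecreasing on (0, ∞). -/
open Real Set Filter

/-- Monotonicity lemma for the Euler-type differential inequality
`g″ + (a/r)g′ + (c/r²)g ≥ 0` with indicial roots `α, β` (so `α + β = 1 − a`,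
`αβ = c`): under the boundary condition at `r = 0`, `r ↦ g(r)/r^α` is
nondecreasing on `(0, ∞)`. -/
theorem euler_monotonicity (a c α β : ℝ) (hsum : α + β = 1 - a) (hprod : α * β = c)
    (g g' g'' : ℝ → ℝ)
    (hg' : ∀ r, 0 < r → HasDerivAt g (g' r) r)
    (hg'' : ∀ r, 0 < r → HasDerivAt g' (g'' r) r)
    (hineq : ∀ r, 0 < r → 0 ≤ g'' r + (a / r) * g' r + (c / r ^ 2) * g r)
    (hlim : Filter.Tendsto
      (fun r : ℝ => g' r * r ^ (1 - β) - α * g r * r ^ (-β))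
      (nhdsWithin 0 (Set.Ioi 0)) (nhds 0)) :
    MonotoneOn (fun r : ℝ => g r / r ^ α) (Set.Ioi 0) := by
  have ha : a = 1 - α - β := by linarith
  have hc : c = α * β := hprod.symm
  subst ha hc
  set h : ℝ → ℝ := fun r => g' r * r ^ (1 - β) - α * g r * r ^ (-β) with hh
  -- derivative of h
  have hhd : ∀ r, 0 < r → HasDerivAt h
      ((g'' r * r ^ (1 - β) + g' r * ((1 - β) * r ^ (1 - β - 1)))
        - (α * g' r * r ^ (-β) + α * g r * (-β * r ^ (-β - 1)))) r := by
    intro r hr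
    exact ((hg'' r hr).mul (Real.hasDerivAt_rpow_const (Or.inl hr.ne'))).sub
      (((hg' r hr).const_mul α).mul (Real.hasDerivAt_rpow_const (Or.inl hr.ne')))
  -- nonnegativity of h'
  have hd_nonneg : ∀ r, 0 < r →
      0 ≤ (g'' r * r ^ (1 - β) + g' r * ((1 - β) * r ^ (1 - β - 1)))
        - (α * g' r * r ^ (-β) + α * g r * (-β * r ^ (-β - 1))) := by
    intro r hr
    have e1 : r ^ (1 - β) = r ^ (-β) * r := by
      rw [show (1 - β) = -β + 1 by ring, Real.rpow_add hr, Real.rpow_one]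
    have e2 : r ^ (1 - β - 1) = r ^ (-β) := by norm_num
    have e3 : r ^ (-β - 1) = r ^ (-β) / r := by
      rw [show (-β - 1) = -β + (-1) by ring, Real.rpow_add hr, Real.rpow_neg_one,
        div_eq_mul_inv]
    have key := hineq r hr
    have hpos : (0:ℝ) < r ^ (-β) := Real.rpow_pos_of_pos hr _
    have : (g'' r * r ^ (1 - β) + g' r * ((1 - β) * r ^ (1 - β - 1)))
        - (α * g' r * r ^ (-β) + α * g r * (-β * r ^ (-β - 1)))
        = (r ^ (-β) * r) *
          (g'' r + ((1 - α - β) / r) * g' r + (α * β / r ^ 2) * g r) := by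
      rw [e1, e2, e3]
      field_simp
      ring
    rw [this]
    exact mul_nonneg (by positivity) key
  -- h is monotone on (0,∞)
  have hmono : MonotoneOn h (Set.Ioi 0) := by
    apply monotoneOn_of_deriv_nonneg (convex_Ioi 0)
    · exact fun r hr => ((hhd r hr).continuousAt).continuousWithinAt
    · rw [interior_Ioi]
      exact fun r hr => ((hhd r hr).differentiableAt).differentiableWithinAt
    · rw [interior_Ioi]
      intro r hr
      rw [(hhd r hr).deriv]
      exact hd_nonneg r hr
  -- h is nonnegative on (0,∞)
  have hnonneg : ∀ r, 0 < r → 0 ≤ h r := by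
    intro r hr
    refine le_of_tendsto hlim ?_
    filter_upwards [Ioo_mem_nhdsGT_of_mem (Set.left_mem_Ico.2 hr)] with x hx
    exact hmono hx.1 hr hx.2.le
  -- key sign information
  have hk : ∀ r, 0 < r → 0 ≤ r * g' r - α * g r := by
    intro r hr
    have hpos : (0:ℝ) < r ^ (-β) := Real.rpow_pos_of_pos hr _
    have e1 : r ^ (1 - β) = r ^ (-β) * r := by
      rw [show (1 - β) = -β + 1 by ring, Real.rpow_add hr, Real.rpow_one]
    have h0 := hnonneg r hr
    rw [hh] at h0
    simp only [e1] at h0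
    have : h r = r ^ (-β) * (r * g' r - α * g r) := by
      rw [hh]; simp only [e1]; ring
    nlinarith [this ▸ hnonneg r hr]
  -- derivative of g r / r ^ α
  have hφd : ∀ r, 0 < r → HasDerivAt (fun r : ℝ => g r / r ^ α)
      ((g' r * r ^ α - g r * (α * r ^ (α - 1))) / (r ^ α) ^ 2) r := by
    intro r hr
    exact (hg' r hr).div (Real.hasDerivAt_rpow_const (Or.inl hr.ne'))
      (Real.rpow_pos_of_pos hr α).ne'
  have hφ_nonneg : ∀ r, 0 < r →
      0 ≤ (g' r * r ^ α - g r * (α * r ^ (α - 1))) / (r ^ α) ^ 2 := by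
    intro r hr
    have e : r ^ α = r ^ (α - 1) * r := by
      rw [show α = (α - 1) + 1 by ring]
      rw [Real.rpow_add hr, Real.rpow_one]
      norm_num
    have hnum : g' r * r ^ α - g r * (α * r ^ (α - 1))
        = r ^ (α - 1) * (r * g' r - α * g r) := by
      rw [e]; ring
    rw [hnum]
    exact div_nonneg (mul_nonneg (Real.rpow_pos_of_pos hr _).le (hk r hr)) (sq_nonneg _)
  apply monotoneOn_of_deriv_nonneg (convex_Ioi 0)
  · exact fun r hr => ((hφd r hr).continuousAt).continuousWithinAt
  · rw [interior_Ioi]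
    exact fun r hr => ((hφd r hr).differentiableAt).differentiableWithinAt
  · rw [interior_Ioi]
    intro r hr
    rw [(hφd r hr).deriv]
    exact hφ_nonneg r hr
end

section
/- Let a, c ∈ ℝ and let α, β ∈ ℝ satisfy α + β = 1 − a and α·β = c (so α and β are the roots of t² − (1−a)t + c = 0), with α > 0. Let g : (0, ∞) → ℝ be twice differentiable with g(r) ≥ 0 for all r > 0, satisfying g″(r) + (a/r)·g′(r) + (c/r²)·g(r) ≥ 0 for all r > 0 and lim_{r→0⁺} ( g′(r)·r^{1−β} − α·g(r)·r^{−β} ) = 0. If moreover there is a constant C > 0 with g(r) ≤ C·(1 + log(1+r)) for all r ≥ 1, then g is identically zero on (0, ∞). -/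
open Filter Real Set

private lemma euler_mono_aux (f f' : ℝ → ℝ)
    (hf : ∀ r : ℝ, 0 < r → HasDerivAt f (f' r) r)
    (h0 : ∀ r : ℝ, 0 < r → 0 ≤ f' r) :
    ∀ s t : ℝ, 0 < s → s ≤ t → f s ≤ f t := by
  intro s t hs hst
  rcases eq_or_lt_of_le hst with rfl | hlt
  · exact le_rfl
  · have hcont : ContinuousOn f (Icc s t) := fun x hx =>
      ((hf x (lt_of_lt_of_le hs hx.1)).continuousAt).continuousWithinAt
    obtain ⟨x, hx, hslope⟩ := exists_hasDerivAt_eq_slope f f' hlt hcont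
      (fun x hx => hf x (hs.trans hx.1))
    have hx0 : 0 ≤ f' x := h0 x (hs.trans hx.1)
    rw [hslope] at hx0
    have hts : 0 < t - s := sub_pos.mpr hlt
    have := mul_nonneg hx0 hts.le
    rw [div_mul_cancel₀ _ hts.ne'] at this
    linarith

/-- Vanishing lemma concluding the main theorems of Section 5: a nonnegative
solution of the Euler-type differential inequality `g″ + (a/r)g′ + (c/r²)g ≥ 0`
with indicial roots `α, β` (`α + β = 1 − a`, `αβ = c`, `α > 0`), satisfying the
boundary condition at `r = 0` and growing at most logarithmically, vanishes. -/
theorem euler_vanishing (a c α β : ℝ) (hsum : α + β = 1 - a) (hprod : α * β = c)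
    (hα : 0 < α)
    (g g' g'' : ℝ → ℝ)
    (hnonneg : ∀ r, 0 < r → 0 ≤ g r)
    (hg' : ∀ r, 0 < r → HasDerivAt g (g' r) r)
    (hg'' : ∀ r, 0 < r → HasDerivAt g' (g'' r) r)
    (hineq : ∀ r, 0 < r → 0 ≤ g'' r + (a / r) * g' r + (c / r ^ 2) * g r)
    (hlim : Filter.Tendsto
      (fun r : ℝ => g' r * r ^ (1 - β) - α * g r * r ^ (-β))
      (nhdsWithin 0 (Set.Ioi 0)) (nhds 0))
    (C : ℝ) (hC : 0 < C)
    (hgrowth : ∀ r, 1 ≤ r → g r ≤ C * (1 + Real.log (1 + r))) :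
    ∀ r, 0 < r → g r = 0 := by
  have ha : a = 1 - α - β := by linarith
  subst hprod
  subst ha
  set h : ℝ → ℝ := fun r => g' r * r ^ (1 - β) - α * g r * r ^ (-β) with hdef
  -- derivative of h
  have hderiv : ∀ r : ℝ, 0 < r → HasDerivAt h
      ((r * r ^ (-β)) *
        (g'' r + ((1 - α - β) / r) * g' r + ((α * β) / r ^ 2) * g r)) r := by
    intro r hr
    have e1 : r ^ (1 - β) = r * r ^ (-β) := by
      rw [show (1 - β : ℝ) = 1 + -β by ring, Real.rpow_add hr, Real.rpow_one]
    have e2 : r ^ (1 - β - 1) = r ^ (-β) := by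
      rw [show (1 - β - 1 : ℝ) = -β by ring]
    have e3 : r ^ (-β - 1) = r ^ (-β) / r := by
      rw [show (-β - 1 : ℝ) = -β + -1 by ring, Real.rpow_add hr, Real.rpow_neg_one]
      ring
    have hr1 : HasDerivAt (fun x : ℝ => x ^ (1 - β)) ((1 - β) * r ^ (1 - β - 1)) r :=
      Real.hasDerivAt_rpow_const (Or.inl hr.ne')
    have hr2 : HasDerivAt (fun x : ℝ => x ^ (-β)) ((-β) * r ^ (-β - 1)) r :=
      Real.hasDerivAt_rpow_const (Or.inl hr.ne')
    have hd1 : HasDerivAt (fun x => g' x * x ^ (1 - β))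
        (g'' r * r ^ (1 - β) + g' r * ((1 - β) * r ^ (1 - β - 1))) r :=
      (hg'' r hr).mul hr1
    have hd2 : HasDerivAt (fun x => α * g x * x ^ (-β))
        ((α * g' r) * r ^ (-β) + (α * g r) * ((-β) * r ^ (-β - 1))) r :=
      ((hg' r hr).const_mul α).mul hr2
    have hd := hd1.sub hd2
    refine hd.congr_deriv ?_
    rw [e1, e2, e3]
    field_simp
    ring
  -- h is nondecreasing and tends to 0 at 0⁺, hence nonnegative
  have hmono : ∀ s t : ℝ, 0 < s → s ≤ t → h s ≤ h t := by
    refine euler_mono_aux h _ hderiv ?_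
    intro r hr
    have hP : (0:ℝ) < r ^ (-β) := Real.rpow_pos_of_pos hr _
    exact mul_nonneg (mul_nonneg hr.le hP.le) (hineq r hr)
  have hh0 : ∀ r : ℝ, 0 < r → 0 ≤ h r := by
    intro r hr
    refine le_of_tendsto hlim ?_
    filter_upwards [Ioo_mem_nhdsGT_of_mem (by exact ⟨le_rfl, hr⟩ : (0:ℝ) ∈ Ico 0 r)]
      with x hx
    exact hmono x r hx.1 hx.2.le
  -- key pointwise inequality : r g' - α g ≥ 0
  have hkey : ∀ r : ℝ, 0 < r → 0 ≤ r * g' r - α * g r := by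
    intro r hr
    have hP : (0:ℝ) < r ^ (-β) := Real.rpow_pos_of_pos hr _
    have e1 : r ^ (1 - β) = r * r ^ (-β) := by
      rw [show (1 - β : ℝ) = 1 + -β by ring, Real.rpow_add hr, Real.rpow_one]
    have h1 : 0 ≤ r ^ (-β) * (r * g' r - α * g r) := by
      have h2 := hh0 r hr
      simp only [hdef, e1] at h2
      calc (0:ℝ) ≤ g' r * (r * r ^ (-β)) - α * g r * r ^ (-β) := h2
        _ = r ^ (-β) * (r * g' r - α * g r) := by ring
    exact nonneg_of_mul_nonneg_right h1 hP
  -- φ = g r * r^(-α) is nondecreasing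
  have hφmono : ∀ s t : ℝ, 0 < s → s ≤ t → g s * s ^ (-α) ≤ g t * t ^ (-α) := by
    refine euler_mono_aux _ (fun r => r ^ (-α - 1) * (r * g' r - α * g r)) ?_ ?_
    · intro r hr
      have hr1 : HasDerivAt (fun x : ℝ => x ^ (-α)) ((-α) * r ^ (-α - 1)) r :=
        Real.hasDerivAt_rpow_const (Or.inl hr.ne')
      have hd : HasDerivAt (fun x => g x * x ^ (-α))
          (g' r * r ^ (-α) + g r * ((-α) * r ^ (-α - 1))) r := (hg' r hr).mul hr1
      convert hd using 1
      have e1 : r ^ (-α) = r * r ^ (-α - 1) := by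
        have h2 := Real.rpow_add hr 1 (-α - 1)
        rw [Real.rpow_one] at h2
        rw [← h2]; congr 1; ring
      rw [e1]; ring
    · intro r hr
      exact mul_nonneg (Real.rpow_pos_of_pos hr _).le (hkey r hr)
  -- conclusion
  intro r hr
  set b : ℝ := g r * r ^ (-α) with hb
  have hbound : ∀ᶠ t in atTop,
      b ≤ C * (1 + Real.log 2 + Real.log t) * t ^ (-α) := by
    filter_upwards [eventually_ge_atTop (max r 1)] with t ht
    have ht1 : (1:ℝ) ≤ t := le_trans (le_max_right r 1) ht
    have ht0 : (0:ℝ) < t := lt_of_lt_of_le one_pos ht1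
    have hQ : (0:ℝ) < t ^ (-α) := Real.rpow_pos_of_pos ht0 _
    have s1 : b ≤ g t * t ^ (-α) := hφmono r t hr (le_trans (le_max_left r 1) ht)
    have s2 : g t * t ^ (-α) ≤ C * (1 + Real.log (1 + t)) * t ^ (-α) :=
      mul_le_mul_of_nonneg_right (hgrowth t ht1) hQ.le
    have s3 : Real.log (1 + t) ≤ Real.log 2 + Real.log t := by
      have : Real.log (1 + t) ≤ Real.log (2 * t) :=
        Real.log_le_log (by linarith) (by linarith)
      rwa [Real.log_mul two_ne_zero ht0.ne'] at this
    have s4 : C * (1 + Real.log (1 + t)) * t ^ (-α)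
        ≤ C * (1 + Real.log 2 + Real.log t) * t ^ (-α) := by
      apply mul_le_mul_of_nonneg_right _ hQ.le
      nlinarith
    linarith
  have TA : Tendsto (fun t : ℝ => t ^ (-α)) atTop (nhds 0) := tendsto_rpow_neg_atTop hα
  have TB : Tendsto (fun t : ℝ => Real.log t * t ^ (-α)) atTop (nhds 0) := by
    have := (isLittleO_log_rpow_atTop hα).tendsto_div_nhds_zero
    refine this.congr' ?_
    filter_upwards [eventually_gt_atTop (0:ℝ)] with x hx
    rw [Real.rpow_neg hx.le, div_eq_mul_inv]
  have TF : Tendsto (fun t : ℝ => C * (1 + Real.log 2 + Real.log t) * t ^ (-α))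
      atTop (nhds 0) := by
    have heq : (fun t : ℝ => C * (1 + Real.log 2 + Real.log t) * t ^ (-α))
        = fun t => (C * (1 + Real.log 2)) * t ^ (-α) + C * (Real.log t * t ^ (-α)) := by
      funext t; ring
    rw [heq]
    simpa using (TA.const_mul (C * (1 + Real.log 2))).add (TB.const_mul C)
  have hble : b ≤ 0 := ge_of_tendsto TF hbound
  have hbge : 0 ≤ b := mul_nonneg (hnonneg r hr) (Real.rpow_pos_of_pos hr _).le
  have hbz : g r * r ^ (-α) = 0 := le_antisymm hble hbge
  rcases mul_eq_zero.mp hbz with h1 | h1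
  · exact h1
  · exact absurd h1 (Real.rpow_pos_of_pos hr _).ne'
end
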